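/- arXiv:2402.17637 — 4 statements merged into one kernel-verified Lean document; each statement's English description precedes it below -/
import Mathlib

section
/- Under homoskedastic noise (Ω_t = Ω for all t), the Total Covariance estimator Λ̂^TC = Σ̂ − (4/n)·(1−1/K)·Ω satisfies E[Λ̂^TC] = Λ_K exactly, where Σ̂ is the empirical covariance of the estimated treatment effects. -/
open MeasureTheory ProbabilityTheory Finset

/-!
Write `X_t = τ̂(t)` and `c = 4/n`. Independence across `t` and the homoskedastic covariance give
the second moments `E[X_t X_sᵀ] = τ(t) τ(s)ᵀ + [t = s] c Ω`. The empirical covariance is a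
bilinear form in `(X_t)` whose diagonal weights `1/K - 1/K²` add up to `1 - 1/K`; so its mean is
the empirical covariance `Λ_K` of the means plus `(1 - 1/K) c Ω`, which is exactly the correction.
-/

noncomputable def empiricalCov {K : ℕ} (x y : Fin K → ℝ) : ℝ :=
  (1 / K : ℝ) * ∑ t, x t * y t - ((1 / K : ℝ) * ∑ t, x t) * ((1 / K : ℝ) * ∑ t, y t)

lemma empiricalCov_eq {K : ℕ} (x y : Fin K → ℝ) :
    empiricalCov x y =
      (1 / K : ℝ) * ∑ t, x t * y t - (1 / K : ℝ) ^ 2 * ∑ t, ∑ s, x t * y s := by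
  rw [empiricalCov, ← sum_mul_sum]
  ring

lemma empiricalCov_add_diag {K : ℕ} (hK : K ≠ 0) (m n : Fin K → ℝ) (v : ℝ) :
    (1 / K : ℝ) * ∑ t, (m t * n t + v) -
        (1 / K : ℝ) ^ 2 * ∑ t, ∑ s, (m t * n s + if t = s then v else 0) =
      empiricalCov m n + (1 - 1 / K : ℝ) * v := by
  simp only [sum_add_distrib, sum_ite_eq, mem_univ, if_true, sum_const, card_univ,
    Fintype.card_fin, nsmul_eq_mul, empiricalCov_eq]
  field_simp
  ring

section Moments

variable {W : Type*} [MeasurableSpace W] {μ : Measure W}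

lemma integrable_empiricalCov {K : ℕ} {X Y : Fin K → W → ℝ}
    (hXY : ∀ t s, Integrable (fun ω => X t ω * Y s ω) μ) :
    Integrable (fun ω => empiricalCov (X · ω) (Y · ω)) μ := by
  simp_rw [empiricalCov_eq]
  exact ((integrable_finsetSum _ fun t _ => hXY t t).const_mul _).sub
    ((integrable_finsetSum _ fun t _ => integrable_finsetSum _ fun s _ => hXY t s).const_mul _)

lemma integral_empiricalCov {K : ℕ} {X Y : Fin K → W → ℝ}
    (hXY : ∀ t s, Integrable (fun ω => X t ω * Y s ω) μ) :
    ∫ ω, empiricalCov (X · ω) (Y · ω) ∂μ =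
      (1 / K : ℝ) * ∑ t, ∫ ω, X t ω * Y t ω ∂μ -
        (1 / K : ℝ) ^ 2 * ∑ t, ∑ s, ∫ ω, X t ω * Y s ω ∂μ := by
  have hdiag : Integrable (fun ω => ∑ t, X t ω * Y t ω) μ :=
    integrable_finsetSum _ fun t _ => hXY t t
  have hall : Integrable (fun ω => ∑ t, ∑ s, X t ω * Y s ω) μ :=
    integrable_finsetSum _ fun t _ => integrable_finsetSum _ fun s _ => hXY t s
  simp_rw [empiricalCov_eq]
  rw [integral_sub (hdiag.const_mul _) (hall.const_mul _), integral_const_mul,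
    integral_const_mul, integral_finsetSum _ fun t _ => hXY t t,
    integral_finsetSum _ fun t _ => integrable_finsetSum _ fun s _ => hXY t s]
  simp_rw [integral_finsetSum _ fun s _ => hXY _ s]

lemma integral_apply_mul_apply_of_iIndepFun [IsProbabilityMeasure μ] {ι κ : Type*}
    [DecidableEq ι] {X : ι → W → κ → ℝ} (hindep : iIndepFun X μ)
    (hL2 : ∀ t k, MemLp (fun ω => X t ω k) 2 μ) (t s : ι) (k k' : κ) :
    ∫ ω, X t ω k * X s ω k' ∂μ =
      (∫ ω, X t ω k ∂μ) * (∫ ω, X s ω k' ∂μ) +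
        if t = s then cov[fun ω => X t ω k, fun ω => X t ω k'; μ] else 0 := by
  split_ifs with hts
  · subst hts
    rw [covariance_eq_sub (hL2 t k) (hL2 t k')]
    simp only [Pi.mul_apply]
    ring
  · rw [add_zero]
    exact ((hindep.indepFun hts).comp (measurable_pi_apply k) (measurable_pi_apply k'))
      |>.integral_fun_mul_eq_mul_integral (hL2 t k).1 (hL2 s k').1

end Moments

theorem stmt9_general {W : Type*} [MeasurableSpace W] (μ : Measure W) [IsProbabilityMeasure μ]
    (K G n : ℕ) (hK : 0 < K)
    (τhat : Fin K → W → Fin G → ℝ) (τ : Fin K → Fin G → ℝ)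
    (Ω : Matrix (Fin G) (Fin G) ℝ)
    (hmeas : ∀ t, Measurable (τhat t))
    (hindep : iIndepFun τhat μ)
    (hint : ∀ t t' g g', Integrable (fun ω => τhat t ω g * τhat t' ω g') μ)
    (hmean : ∀ t g, ∫ ω, τhat t ω g ∂μ = τ t g)
    (hcov : ∀ t g g',
      ∫ ω, (τhat t ω g - τ t g) * (τhat t ω g' - τ t g') ∂μ = (4 / n : ℝ) * Ω g g')
    (ΛK : Matrix (Fin G) (Fin G) ℝ)
    (hΛK : ∀ g g', ΛK g g' =
      (1 / K : ℝ) * ∑ t, τ t g * τ t g' -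
        ((1 / K : ℝ) * ∑ t, τ t g) * ((1 / K : ℝ) * ∑ t, τ t g')) :
    ∀ g g',
      ∫ ω, ((1 / K : ℝ) * ∑ t, τhat t ω g * τhat t ω g' -
          ((1 / K : ℝ) * ∑ t, τhat t ω g) * ((1 / K : ℝ) * ∑ t, τhat t ω g')
          - (4 / n : ℝ) * (1 - 1 / K : ℝ) * Ω g g') ∂μ
        = ΛK g g' := by
  intro g g'
  have hL2 : ∀ t k, MemLp (fun ω => τhat t ω k) 2 μ := fun t k =>
    (memLp_two_iff_integrable_sq (measurable_pi_iff.1 (hmeas t) k).aestronglyMeasurable).2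
      (by simpa only [sq] using hint t t k k)
  have hmoment : ∀ t s, ∫ ω, τhat t ω g * τhat s ω g' ∂μ =
      τ t g * τ s g' + if t = s then (4 / n : ℝ) * Ω g g' else 0 := by
    intro t s
    rw [integral_apply_mul_apply_of_iIndepFun hindep hL2, hmean, hmean]
    split_ifs with hts
    · subst hts
      rw [← hcov t g g']
      simp only [covariance, hmean]
    · rfl
  change ∫ ω, (empiricalCov (τhat · ω g) (τhat · ω g') - _) ∂μ = _
  rw [integral_sub (integrable_empiricalCov (hint · · g g')) (integrable_const _),
    integral_empiricalCov (hint · · g g'), integral_const, probReal_univ, one_smul]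
  simp only [hmoment, ↓reduceIte]
  rw [empiricalCov_add_diag hK.ne', hΛK, empiricalCov]
  ring

/-- Under homoskedastic noise (`Ω_t = Ω` for all `t`), the Total Covariance estimator
`Λ̂ᵀᶜ = Σ̂ - (4/n)(1 - 1/K) Ω` satisfies `E[Λ̂ᵀᶜ] = Λ_K` exactly. -/
theorem stmt9 {W : Type*} [MeasurableSpace W] (μ : Measure W) [IsProbabilityMeasure μ]
    (K G n : ℕ) (hK : 0 < K) (hn : 0 < n)
    (τhat : Fin K → W → Fin G → ℝ) (τ : Fin K → Fin G → ℝ)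
    (Ω : Matrix (Fin G) (Fin G) ℝ)
    (hmeas : ∀ t, Measurable (τhat t))
    (hindep : iIndepFun τhat μ)
    (hint : ∀ t t' g g', Integrable (fun ω => τhat t ω g * τhat t' ω g') μ)
    (hmean : ∀ t g, ∫ ω, τhat t ω g ∂μ = τ t g)
    (hcov : ∀ t g g',
      ∫ ω, (τhat t ω g - τ t g) * (τhat t ω g' - τ t g') ∂μ = (4 / n : ℝ) * Ω g g')
    (ΛK : Matrix (Fin G) (Fin G) ℝ)
    (hΛK : ∀ g g', ΛK g g' =
      (1 / K : ℝ) * ∑ t, τ t g * τ t g' -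
        ((1 / K : ℝ) * ∑ t, τ t g) * ((1 / K : ℝ) * ∑ t, τ t g')) :
    ∀ g g',
      ∫ ω, ((1 / K : ℝ) * ∑ t, τhat t ω g * τhat t ω g' -
          ((1 / K : ℝ) * ∑ t, τhat t ω g) * ((1 / K : ℝ) * ∑ t, τhat t ω g')
          - (4 / n : ℝ) * (1 - 1 / K : ℝ) * Ω g g') ∂μ
        = ΛK g g' :=
  stmt9_general μ K G n hK τhat τ Ω hmeas hindep hint hmean hcov ΛK hΛK
end

section
/- If Λ = [[β^T C β, (Cβ)^T],[Cβ, C]] with C positive definite, then for any positive definite Ψ, the smallest generalized eigenvalue of (Λ, Ψ) is 0 and has eigenvector [1, −β^T]^T, and consequently the TLS parameter θ_{2,Ψ}(Λ) = −γ_S/γ_Y computed from this eigenvector equals β. -/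
open Matrix

/-- If `Λ = [[βᵀCβ, (Cβ)ᵀ],[Cβ, C]]` with `C` positive definite, then for any positive definite
`Ψ`, `γ = [1, -βᵀ]ᵀ` is a generalized eigenvector of `(Λ, Ψ)` with eigenvalue `0`, `0` is the
smallest generalized eigenvalue, and the TLS parameter `θ₂ = -γ_S/γ_Y` equals `β`. -/
theorem stmt11 (m : ℕ) (C : Matrix (Fin m) (Fin m) ℝ) (β : Fin m → ℝ)
    (hC : C.PosDef)
    (Ψ : Matrix (Unit ⊕ Fin m) (Unit ⊕ Fin m) ℝ) (hΨ : Ψ.PosDef)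
    (Λ : Matrix (Unit ⊕ Fin m) (Unit ⊕ Fin m) ℝ)
    (hΛ : Λ = Matrix.fromBlocks
      (Matrix.of fun _ _ : Unit => β ⬝ᵥ C.mulVec β)
      (Matrix.of fun (_ : Unit) j => C.mulVec β j)
      (Matrix.of fun i (_ : Unit) => C.mulVec β i)
      C)
    (γ : Unit ⊕ Fin m → ℝ) (hγ : γ = Sum.elim (fun _ => (1 : ℝ)) (fun i => -β i)) :
    γ ≠ 0 ∧ Λ.mulVec γ = (0 : ℝ) • Ψ.mulVec γ ∧
      (∀ (κ : ℝ) (w : Unit ⊕ Fin m → ℝ), w ≠ 0 → Λ.mulVec w = κ • Ψ.mulVec w → 0 ≤ κ) ∧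
      (∀ i, -(γ (Sum.inr i)) / γ (Sum.inl ()) = β i) := by
  subst hΛ hγ
  set B : Matrix (Fin m) (Unit ⊕ Fin m) ℝ :=
    Matrix.fromCols (Matrix.of fun i (_ : Unit) => β i) (1 : Matrix (Fin m) (Fin m) ℝ) with hB
  have hΛB : (Matrix.fromBlocks
      (Matrix.of fun _ _ : Unit => β ⬝ᵥ C.mulVec β)
      (Matrix.of fun (_ : Unit) j => C.mulVec β j)
      (Matrix.of fun i (_ : Unit) => C.mulVec β i)
      C) = Bᴴ * C * B := by
    ext (i | i) (j | j) <;>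
      simp [hB, Matrix.mul_apply, Matrix.fromCols, Matrix.mulVec, dotProduct,
        Finset.sum_mul, Finset.mul_sum, Matrix.one_apply, mul_comm, mul_left_comm]
    case' inl.inl =>
      exact Finset.sum_congr rfl fun x _ => Finset.sum_congr rfl fun y _ => by
        rw [show C x y = C y x from by
          have := congrFun (congrFun hC.1 y) x
          simpa using this]
    case' inl.inr =>
      exact Finset.sum_congr rfl fun x _ => by
        rw [show C j x = C x j from by
          have := congrFun (congrFun hC.1 x) j
          simpa using this]
  have hPSD : Matrix.PosSemidef (Bᴴ * C * B) := hC.posSemidef.conjTranspose_mul_mul_same B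
  refine ⟨?_, ?_, ?_, ?_⟩
  · intro h
    have := congrFun h (Sum.inl ())
    simp at this
  · funext x
    cases x with
    | inl u =>
      simp [Matrix.mulVec, dotProduct, Fintype.sum_sum_type, Matrix.fromBlocks]
      rw [add_neg_eq_zero]
      exact Finset.sum_congr rfl fun x _ => mul_comm _ _
    | inr i =>
      simp [Matrix.mulVec, dotProduct, Fintype.sum_sum_type, Matrix.fromBlocks]
  · intro κ w hw heq
    rw [hΛB] at heq
    have h1 : w ⬝ᵥ (Bᴴ * C * B).mulVec w = κ * (w ⬝ᵥ Ψ.mulVec w) := by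
      rw [heq, dotProduct_smul]; rfl
    have h2 : 0 ≤ w ⬝ᵥ (Bᴴ * C * B).mulVec w := by
      simpa using hPSD.dotProduct_mulVec_nonneg w
    have h3 : 0 < w ⬝ᵥ Ψ.mulVec w := by
      simpa using hΨ.dotProduct_mulVec_pos hw
    nlinarith [h1, h2, h3]
  · intro i
    simp
end

section
/- In the setting of balanced groups of size n, using the within-group empirical covariance for Ω, the Total Covariance plug-in OLS estimator θ_1(Λ̂^TC) equals the k-class IV estimator (S̃⁰)^T(I − (1 + 4/n)M_T)Ỹ⁰ / (S̃⁰)^T(I − (1 + 4/n)M_T)S̃⁰ with k = 1 + 4/n, where S̃⁰, Ỹ⁰ are the centered transformed variables and M_T = I − P_T is the annihilator of group membership. -/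
open Matrix Finset

lemma fiber_sum' {N K : ℕ} (T : Fin N → Fin K) (f : Fin N → ℝ) :
    ∑ t, ∑ i ∈ univ.filter (fun i => T i = t), f i = ∑ i, f i := by
  simp only [Finset.sum_filter]
  rw [Finset.sum_comm]
  simp

lemma fiber_mul' {N K : ℕ} (T : Fin N → Fin K) (f : Fin N → ℝ) (g : Fin K → ℝ) :
    ∑ i, f i * g (T i) = ∑ t, (∑ i ∈ univ.filter (fun i => T i = t), f i) * g t := by
  rw [← fiber_sum' T (fun i => f i * g (T i))]
  refine Finset.sum_congr rfl fun t _ => ?_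
  rw [Finset.sum_mul]
  refine Finset.sum_congr rfl fun i hi => ?_
  rw [(Finset.mem_filter.mp hi).2]

lemma sum_centered' {N : ℕ} (f g : Fin N → ℝ) (a b : ℝ) :
    ∑ i : Fin N, (f i - a) * (g i - b)
      = ∑ i, f i * g i - a * ∑ i, g i - b * ∑ i, f i + N * (a * b) := by
  have h : ∀ i, (f i - a) * (g i - b) = f i * g i - a * g i - b * f i + a * b :=
    fun i => by ring
  rw [Finset.sum_congr rfl fun i _ => h i, Finset.sum_add_distrib,
    Finset.sum_sub_distrib, Finset.sum_sub_distrib, ← Finset.mul_sum, ← Finset.mul_sum,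
    Finset.sum_const, Finset.card_univ, Fintype.card_fin, nsmul_eq_mul]

/-- With balanced experiments of size `n` and the within-group empirical covariance used for
`Ω`, the Total-Covariance plug-in OLS estimator `θ₁(Λ̂ᵀᶜ)` equals the `k`-class IV estimator
with `k = 1 + 4/n` (scalar secondary metric case). -/
theorem stmt17 (N K n : ℕ) (hn : 0 < n) (hK : 0 < K) (hN : N = K * n)
    (T : Fin N → Fin K)
    (hbal : ∀ t, (univ.filter fun i => T i = t).card = n)
    (S Y : Fin N → ℝ)
    (τS τY : Fin K → ℝ)
    (hτS : ∀ t, τS t = (1 / n : ℝ) * ∑ i ∈ univ.filter fun i => T i = t, S i)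
    (hτY : ∀ t, τY t = (1 / n : ℝ) * ∑ i ∈ univ.filter fun i => T i = t, Y i)
    (SigSY SigSS ΩSY ΩSS ΛSY ΛSS : ℝ)
    (hSigSY : SigSY = (1 / K : ℝ) * ∑ t, τS t * τY t -
      ((1 / K : ℝ) * ∑ t, τS t) * ((1 / K : ℝ) * ∑ t, τY t))
    (hSigSS : SigSS = (1 / K : ℝ) * ∑ t, τS t * τS t -
      ((1 / K : ℝ) * ∑ t, τS t) * ((1 / K : ℝ) * ∑ t, τS t))
    (hΩSY : ΩSY = (1 / N : ℝ) * ∑ i, (S i - τS (T i)) * (Y i - τY (T i)))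
    (hΩSS : ΩSS = (1 / N : ℝ) * ∑ i, (S i - τS (T i)) * (S i - τS (T i)))
    (hΛSY : ΛSY = SigSY - (4 / n : ℝ) * ΩSY)
    (hΛSS : ΛSS = SigSS - (4 / n : ℝ) * ΩSS)
    (Ttilde : Matrix (Fin N) (Fin K) ℝ)
    (hT : ∀ i t, Ttilde i t = if T i = t then 1 else 0)
    (P M : Matrix (Fin N) (Fin N) ℝ)
    (hP : P = Ttilde * (Ttildeᵀ * Ttilde)⁻¹ * Ttildeᵀ)
    (hM : M = 1 - P)
    (S0 Y0 : Fin N → ℝ)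
    (hS0 : ∀ i, S0 i = S i - (1 / N : ℝ) * ∑ j, S j)
    (hY0 : ∀ i, Y0 i = Y i - (1 / N : ℝ) * ∑ j, Y j) :
    ΛSY / ΛSS
      = (S0 ⬝ᵥ ((1 - (1 + 4 / n : ℝ) • M).mulVec Y0)) /
        (S0 ⬝ᵥ ((1 - (1 + 4 / n : ℝ) • M).mulVec S0)) := by
  have hn' : (n:ℝ) ≠ 0 := Nat.cast_ne_zero.mpr hn.ne'
  have hK' : (K:ℝ) ≠ 0 := Nat.cast_ne_zero.mpr hK.ne'
  have hNr : (N:ℝ) = (K:ℝ) * (n:ℝ) := by rw [hN]; push_cast; ring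
  have hN' : (N:ℝ) ≠ 0 := by rw [hNr]; exact mul_ne_zero hK' hn'
  -- entries of the projection matrix
  have hPe : ∀ i j, P i j = if T i = T j then (n:ℝ)⁻¹ else 0 := by
    have hTT : Ttildeᵀ * Ttilde = (n:ℝ) • (1 : Matrix (Fin K) (Fin K) ℝ) := by
      ext t t'
      simp only [Matrix.mul_apply, Matrix.transpose_apply, hT, Matrix.smul_apply,
        Matrix.one_apply, smul_eq_mul]
      have h1 : ∀ i, (if T i = t then (1:ℝ) else 0) * (if T i = t' then 1 else 0)
          = if T i = t ∧ T i = t' then 1 else 0 := by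
        intro i; by_cases h1 : T i = t <;> by_cases h2 : T i = t' <;> simp [h1, h2]
      rw [Finset.sum_congr rfl fun i _ => h1 i]
      by_cases h : t = t'
      · subst h
        simp only [and_self, mul_one, if_true]
        rw [Finset.sum_boole]
        rw [← hbal t]
      · have : ∀ i, ¬(T i = t ∧ T i = t') := by rintro i ⟨rfl, h2⟩; exact h h2
        simp [this, h]
    have hinv : ((n:ℝ) • (1 : Matrix (Fin K) (Fin K) ℝ))⁻¹ = (n:ℝ)⁻¹ • 1 := by
      apply Matrix.inv_eq_right_inv
      rw [smul_mul_smul_comm]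
      simp [mul_inv_cancel₀ hn']
    intro i j
    rw [hP, hTT, hinv, Matrix.mul_smul, Matrix.mul_one, Matrix.smul_mul]
    simp only [Matrix.smul_apply, Matrix.mul_apply, Matrix.transpose_apply, hT, smul_eq_mul]
    have h1 : ∀ t, (if T i = t then (1:ℝ) else 0) * (if T j = t then 1 else 0)
        = if T i = t ∧ T j = t then 1 else 0 := by
      intro t; by_cases h1 : T i = t <;> by_cases h2 : T j = t <;> simp [h1, h2]
    rw [Finset.sum_congr rfl fun t _ => h1 t]
    by_cases h : T i = T j
    · simp [h, Finset.sum_ite_eq']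
    · have : ∀ t, ¬(T i = t ∧ T j = t) := by rintro t ⟨rfl, h2⟩; exact h h2.symm
      simp [this, h]
  -- expansion of the quadratic form
  set k : ℝ := 1 + 4 / n with hk
  have hdot : ∀ u v : Fin N → ℝ, u ⬝ᵥ ((1 - k • M).mulVec v)
      = (1 - k) * ∑ i, u i * v i
        + k * ((n:ℝ)⁻¹ * ∑ t, (∑ i ∈ univ.filter (fun i => T i = t), u i)
            * (∑ j ∈ univ.filter (fun j => T j = t), v j)) := by
    intro u v
    have hmat : (1 - k • M) = (1 - k) • (1 : Matrix (Fin N) (Fin N) ℝ) + k • P := by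
      rw [hM]; ext i j
      simp only [Matrix.sub_apply, Matrix.add_apply, Matrix.smul_apply, Matrix.one_apply,
        smul_eq_mul]
      ring
    rw [hmat, Matrix.add_mulVec, Matrix.smul_mulVec, Matrix.smul_mulVec,
      Matrix.one_mulVec, dotProduct_add, dotProduct_smul, dotProduct_smul, smul_eq_mul,
      smul_eq_mul]
    congr 1
    congr 1
    have hrow : ∀ i, P.mulVec v i
        = (n:ℝ)⁻¹ * ∑ j ∈ univ.filter (fun j => T j = T i), v j := by
      intro i
      simp only [mulVec, dotProduct, hPe, ite_mul, zero_mul]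
      rw [Finset.mul_sum, Finset.sum_filter]
      exact Finset.sum_congr rfl fun j _ => by simp [eq_comm]
    show ∑ i, u i * (P.mulVec v) i = _
    rw [Finset.sum_congr rfl fun i _ => by rw [hrow i, mul_left_comm]]
    rw [← Finset.mul_sum]
    congr 1
    exact fiber_mul' T u (fun t => ∑ j ∈ univ.filter (fun j => T j = t), v j)
  -- fiber sums of S and Y
  have hfibS : ∀ t, ∑ i ∈ univ.filter (fun i => T i = t), S i = n * τS t := by
    intro t; rw [hτS t]; field_simp
  have hfibY : ∀ t, ∑ i ∈ univ.filter (fun i => T i = t), Y i = n * τY t := by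
    intro t; rw [hτY t]; field_simp
  have hsumS : ∑ i, S i = (n:ℝ) * ∑ t, τS t := by
    rw [← fiber_sum' T S, Finset.mul_sum]
    exact Finset.sum_congr rfl fun t _ => hfibS t
  have hsumY : ∑ i, Y i = (n:ℝ) * ∑ t, τY t := by
    rw [← fiber_sum' T Y, Finset.mul_sum]
    exact Finset.sum_congr rfl fun t _ => hfibY t
  -- centered fiber sums
  have hfibS0 : ∀ t, ∑ i ∈ univ.filter (fun i => T i = t), S0 i
      = (n:ℝ) * τS t - (n:ℝ) * ((1 / N : ℝ) * ∑ j, S j) := by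
    intro t
    rw [Finset.sum_congr rfl fun i _ => hS0 i, Finset.sum_sub_distrib, hfibS t,
      Finset.sum_const, hbal t, nsmul_eq_mul]
  have hfibY0 : ∀ t, ∑ i ∈ univ.filter (fun i => T i = t), Y0 i
      = (n:ℝ) * τY t - (n:ℝ) * ((1 / N : ℝ) * ∑ j, Y j) := by
    intro t
    rw [Finset.sum_congr rfl fun i _ => hY0 i, Finset.sum_sub_distrib, hfibY t,
      Finset.sum_const, hbal t, nsmul_eq_mul]
  -- within-group sums
  have hfibτ : ∀ (g : Fin K → ℝ), ∀ t, ∑ i ∈ univ.filter (fun i => T i = t), g (T i)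
      = (n:ℝ) * g t := by
    intro g t
    rw [Finset.sum_congr rfl fun i hi => by rw [(Finset.mem_filter.mp hi).2],
      Finset.sum_const, hbal t, nsmul_eq_mul]
  have hΩkey : ∀ (f g : Fin N → ℝ) (τf τg : Fin K → ℝ),
      (∀ t, ∑ i ∈ univ.filter (fun i => T i = t), f i = n * τf t) →
      (∀ t, ∑ i ∈ univ.filter (fun i => T i = t), g i = n * τg t) →
      ∑ i, (f i - τf (T i)) * (g i - τg (T i))
        = ∑ i, f i * g i - (n:ℝ) * ∑ t, τf t * τg t := by
    intro f g τf τg hf hg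
    have h : ∀ i, (f i - τf (T i)) * (g i - τg (T i))
        = f i * g i - f i * τg (T i) - g i * τf (T i) + (τf (T i)) * τg (T i) :=
      fun i => by ring
    rw [show (∑ i, (f i - τf (T i)) * (g i - τg (T i)))
        = ∑ i, (f i * g i - f i * τg (T i) - g i * τf (T i) + τf (T i) * τg (T i))
      from Finset.sum_congr rfl fun i _ => h i]
    rw [Finset.sum_add_distrib, Finset.sum_sub_distrib, Finset.sum_sub_distrib]
    rw [fiber_mul' T f τg, fiber_mul' T g τf,
      fiber_mul' T (fun i => τf (T i)) τg]
    have e1 : ∑ t, (∑ i ∈ univ.filter (fun i => T i = t), f i) * τg t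
        = (n:ℝ) * ∑ t, τf t * τg t := by
      rw [Finset.mul_sum]
      exact Finset.sum_congr rfl fun t _ => by rw [hf t]; ring
    have e2 : ∑ t, (∑ i ∈ univ.filter (fun i => T i = t), g i) * τf t
        = (n:ℝ) * ∑ t, τf t * τg t := by
      rw [Finset.mul_sum]
      exact Finset.sum_congr rfl fun t _ => by rw [hg t]; ring
    have e3 : ∑ t, (∑ i ∈ univ.filter (fun i => T i = t), τf (T i)) * τg t
        = (n:ℝ) * ∑ t, τf t * τg t := by
      rw [Finset.mul_sum]
      exact Finset.sum_congr rfl fun t _ => by rw [hfibτ τf t]; ring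
    rw [e1, e2, e3]
    ring
  have hΩSYs : ∑ i, (S i - τS (T i)) * (Y i - τY (T i))
      = ∑ i, S i * Y i - (n:ℝ) * ∑ t, τS t * τY t := hΩkey S Y τS τY hfibS hfibY
  have hΩSSs : ∑ i, (S i - τS (T i)) * (S i - τS (T i))
      = ∑ i, S i * S i - (n:ℝ) * ∑ t, τS t * τS t := hΩkey S S τS τS hfibS hfibS
  -- abbreviations
  set Ca := ∑ t, τS t with hCa
  set Cb := ∑ t, τY t with hCb
  set C := ∑ t, τS t * τY t with hC
  set Cs := ∑ t, τS t * τS t with hCs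
  set Q := ∑ i, S i * Y i with hQ
  set Qs := ∑ i, S i * S i with hQs
  -- the two quadratic forms
  have hnum : S0 ⬝ᵥ ((1 - k • M).mulVec Y0) = (N:ℝ) * ΛSY := by
    rw [hdot S0 Y0]
    simp only [hfibS0, hfibY0]
    simp only [hS0, hY0]
    rw [sum_centered' S Y ((1 / N : ℝ) * ∑ j, S j) ((1 / N : ℝ) * ∑ j, Y j)]
    rw [sum_centered' (fun t => (n:ℝ) * τS t) (fun t => (n:ℝ) * τY t)
      ((n:ℝ) * ((1 / N : ℝ) * ∑ j, S j)) ((n:ℝ) * ((1 / N : ℝ) * ∑ j, Y j))]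
    have e1 : ∑ t, (n:ℝ) * τS t * ((n:ℝ) * τY t) = (n:ℝ) * (n:ℝ) * C := by
      rw [hC, Finset.mul_sum]; exact Finset.sum_congr rfl fun t _ => by ring
    have e2 : ∑ t, (n:ℝ) * τY t = (n:ℝ) * Cb := by rw [hCb, Finset.mul_sum]
    have e3 : ∑ t, (n:ℝ) * τS t = (n:ℝ) * Ca := by rw [hCa, Finset.mul_sum]
    rw [e1, e2, e3]
    rw [hΛSY, hSigSY, hΩSY, hΩSYs]
    simp only [← hCa, ← hCb, ← hC, ← hQ, hsumS, hsumY, hNr, hk]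
    field_simp
    ring
  have hden : S0 ⬝ᵥ ((1 - k • M).mulVec S0) = (N:ℝ) * ΛSS := by
    rw [hdot S0 S0]
    simp only [hfibS0]
    simp only [hS0]
    rw [sum_centered' S S ((1 / N : ℝ) * ∑ j, S j) ((1 / N : ℝ) * ∑ j, S j)]
    rw [sum_centered' (fun t => (n:ℝ) * τS t) (fun t => (n:ℝ) * τS t)
      ((n:ℝ) * ((1 / N : ℝ) * ∑ j, S j)) ((n:ℝ) * ((1 / N : ℝ) * ∑ j, S j))]
    have e1 : ∑ t, (n:ℝ) * τS t * ((n:ℝ) * τS t) = (n:ℝ) * (n:ℝ) * Cs := by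
      rw [hCs, Finset.mul_sum]; exact Finset.sum_congr rfl fun t _ => by ring
    have e3 : ∑ t, (n:ℝ) * τS t = (n:ℝ) * Ca := by rw [hCa, Finset.mul_sum]
    rw [e1, e3]
    rw [hΛSS, hSigSS, hΩSS, hΩSSs]
    simp only [← hCa, ← hCs, ← hQs, hsumS, hNr, hk]
    field_simp
    ring
  rw [hnum, hden, mul_div_mul_left _ _ hN']
end

section
/- Let w be the eigenvector of Ω^{-1/2} Σ Ω^{-1/2} associated with its smallest eigenvalue (Ω positive definite, Σ symmetric positive semidefinite), and set γ = Ω^{-1/2} w. If Σ = Λ + c Ω with c > 0 and Λ positive semidefinite and singular with one-dimensional kernel, then γ spans the kernel of Λ; consequently if the kernel of Λ is spanned by [1, −β^T]^T, the ratio −γ_S/γ_Y equals β. -/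
open Matrix
open scoped MatrixOrder

/-!
Write `R = Ω^{-1/2}`. Since `R Ω R = 1`, the matrix `R Σ R` equals `R Λ R + c • 1`, and `R Λ R`
is positive semidefinite with kernel `R⁻¹ (ker Λ) ≠ 0`. Hence the spectrum of `R Σ R` is bounded
below by `c` and the bound is attained, so a smallest eigenvector `w` satisfies `R Λ R w = 0`,
that is, `γ = R w` lies in `ker Λ`. As `γ ≠ 0` and `ker Λ` is a line, `γ` spans it.
-/

namespace Matrix

variable {n : Type*} [Fintype n]

theorem PosSemidef.nonneg_of_mulVec_eq_smul {A : Matrix n n ℝ} (hA : A.PosSemidef) {v : n → ℝ}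
    (hv : v ≠ 0) {μ : ℝ} (h : A *ᵥ v = μ • v) : 0 ≤ μ := by
  have hpos : 0 < v ⬝ᵥ v := by simpa using dotProduct_star_self_pos_iff.2 hv
  have hnonneg : 0 ≤ μ * (v ⬝ᵥ v) := by
    simpa [h, dotProduct_smul] using hA.dotProduct_mulVec_nonneg v
  exact nonneg_of_mul_nonneg_left hnonneg hpos

variable [DecidableEq n]

theorem add_smul_one_mulVec_eq_smul_iff {A : Matrix n n ℝ} {c μ : ℝ} {v : n → ℝ} :
    (A + c • 1) *ᵥ v = μ • v ↔ A *ᵥ v = (μ - c) • v := by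
  rw [add_mulVec, smul_mulVec, one_mulVec, sub_smul, eq_sub_iff_add_eq]

theorem PosSemidef.mulVec_eq_zero_of_min_eigenvector_add_smul_one {A : Matrix n n ℝ}
    (hA : A.PosSemidef) (hker : ∃ u, u ≠ 0 ∧ A *ᵥ u = 0) {c κ : ℝ} {w : n → ℝ} (hw : w ≠ 0)
    (heig : (A + c • 1) *ᵥ w = κ • w)
    (hmin : ∀ (κ' : ℝ) (w' : n → ℝ), w' ≠ 0 → (A + c • 1) *ᵥ w' = κ' • w' → κ ≤ κ') :
    A *ᵥ w = 0 := by
  rw [add_smul_one_mulVec_eq_smul_iff] at heig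
  obtain ⟨u, hu, hAu⟩ := hker
  have hle : κ ≤ c := hmin c u hu (add_smul_one_mulVec_eq_smul_iff.2 (by simp [hAu]))
  have hge : c ≤ κ := sub_nonneg.1 (hA.nonneg_of_mulVec_eq_smul hw heig)
  rw [heig, le_antisymm hle hge, sub_self, zero_smul]

theorem mul_mul_mulVec_eq_zero_iff {L A R : Matrix n n ℝ} (hL : IsUnit L) {v : n → ℝ} :
    (L * A * R) *ᵥ v = 0 ↔ A *ᵥ (R *ᵥ v) = 0 := by
  rw [← mulVec_mulVec, ← mulVec_mulVec,
    (mulVec_injective_iff_isUnit.2 hL).eq_iff' (mulVec_zero L)]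

theorem exists_ne_zero_mul_mul_mulVec_eq_zero {L A R : Matrix n n ℝ} (hR : IsUnit R) {u : n → ℝ}
    (hu : u ≠ 0) (hAu : A *ᵥ u = 0) : ∃ v, v ≠ 0 ∧ (L * A * R) *ᵥ v = 0 := by
  have hRR : R *ᵥ (R⁻¹ *ᵥ u) = u := by
    rw [mulVec_mulVec, mul_nonsing_inv _ ((isUnit_iff_isUnit_det R).1 hR), one_mulVec]
  refine ⟨R⁻¹ *ᵥ u, fun h => hu ?_, ?_⟩
  · rw [← hRR, h, mulVec_zero]
  · rw [← mulVec_mulVec, ← mulVec_mulVec, hRR, hAu, mulVec_zero]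

namespace PosDef

variable {Ω : Matrix n n ℝ}

theorem isUnit_sqrt (hΩ : Ω.PosDef) : IsUnit (CFC.sqrt Ω) :=
  (CFC.isUnit_sqrt_iff Ω hΩ.posSemidef.nonneg).2 hΩ.isUnit

theorem isUnit_inv_sqrt (hΩ : Ω.PosDef) : IsUnit (CFC.sqrt Ω)⁻¹ :=
  isUnit_nonsing_inv_iff.2 hΩ.isUnit_sqrt

theorem isHermitian_inv_sqrt : ((CFC.sqrt Ω)⁻¹).IsHermitian :=
  (CFC.sqrt_nonneg Ω).posSemidef.isHermitian.inv

theorem inv_sqrt_mul_self_mul_inv_sqrt (hΩ : Ω.PosDef) :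
    (CFC.sqrt Ω)⁻¹ * Ω * (CFC.sqrt Ω)⁻¹ = 1 := by
  have hS : IsUnit (CFC.sqrt Ω).det := (isUnit_iff_isUnit_det _).1 hΩ.isUnit_sqrt
  have hsq := CFC.sqrt_mul_sqrt_self Ω hΩ.posSemidef.nonneg
  generalize CFC.sqrt Ω = S at hS hsq ⊢
  subst hsq
  rw [← Matrix.mul_assoc, nonsing_inv_mul _ hS, Matrix.one_mul, mul_nonsing_inv _ hS]

end PosDef

end Matrix

theorem exists_smul_eq_of_forall_exists_smul_eq {K V : Type*} [Field K] [AddCommGroup V]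
    [Module K V] {P : V → Prop} {u γ : V} (hspan : ∀ x, P x → ∃ a : K, x = a • u) (hγ : P γ)
    (hγ0 : γ ≠ 0) (x : V) (hx : P x) : ∃ a : K, x = a • γ := by
  obtain ⟨a, rfl⟩ := hspan x hx
  obtain ⟨b, rfl⟩ := hspan _ hγ
  have hb : b ≠ 0 := by rintro rfl; simp at hγ0
  exact ⟨a / b, by rw [smul_smul, div_mul_cancel₀ a hb]⟩

theorem neg_div_eq_of_eq_smul_sumElim {K ι : Type*} [Field K] {γ : Unit ⊕ ι → K} {β : ι → K}
    {a : K} (ha : a ≠ 0) (h : γ = a • Sum.elim (fun _ => 1) fun i => -β i) (i : ι) :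
    -γ (Sum.inr i) / γ (Sum.inl ()) = β i := by
  simp [h, ha]

theorem stmt19_general (m : ℕ) (Ω Sig Λ : Matrix (Unit ⊕ Fin m) (Unit ⊕ Fin m) ℝ) (c : ℝ)
    (hΩ : Ω.PosDef) (hΛ : Λ.PosSemidef)
    (hdecomp : Sig = Λ + c • Ω)
    (hker1dim : ∃ u : Unit ⊕ Fin m → ℝ, u ≠ 0 ∧ Λ.mulVec u = 0 ∧
      ∀ u' : Unit ⊕ Fin m → ℝ, Λ.mulVec u' = 0 → ∃ a : ℝ, u' = a • u)
    (R : Matrix (Unit ⊕ Fin m) (Unit ⊕ Fin m) ℝ) (hR : R = (CFC.sqrt Ω)⁻¹)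
    (κ : ℝ) (w : Unit ⊕ Fin m → ℝ) (hw : w ≠ 0)
    (heig : (R * Sig * R).mulVec w = κ • w)
    (hmin : ∀ (κ' : ℝ) (w' : Unit ⊕ Fin m → ℝ), w' ≠ 0 →
      (R * Sig * R).mulVec w' = κ' • w' → κ ≤ κ')
    (γ : Unit ⊕ Fin m → ℝ) (hγ : γ = R.mulVec w) :
    (Λ.mulVec γ = 0 ∧ γ ≠ 0 ∧
      ∀ u : Unit ⊕ Fin m → ℝ, Λ.mulVec u = 0 → ∃ a : ℝ, u = a • γ) ∧
    (∀ β : Fin m → ℝ,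
      (∀ u : Unit ⊕ Fin m → ℝ, Λ.mulVec u = 0 ↔
        ∃ a : ℝ, u = a • (Sum.elim (fun _ => (1 : ℝ)) fun i => -β i)) →
      ∀ i, -(γ (Sum.inr i)) / γ (Sum.inl ()) = β i) := by
  obtain ⟨u₀, hu₀, hΛu₀, hspan⟩ := hker1dim
  have hRunit : IsUnit R := hR ▸ hΩ.isUnit_inv_sqrt
  have hsplit : R * Sig * R = R * Λ * R + c • 1 := by
    rw [hdecomp, Matrix.mul_add, Matrix.add_mul, Matrix.mul_smul, Matrix.smul_mul, hR,
      hΩ.inv_sqrt_mul_self_mul_inv_sqrt]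
  have hRΛR : (R * Λ * R).PosSemidef := by
    have hRherm : R.IsHermitian := hR ▸ PosDef.isHermitian_inv_sqrt
    simpa only [hRherm.eq] using hΛ.conjTranspose_mul_mul_same R
  have hΛγ : Λ *ᵥ γ = 0 := by
    rw [hγ, ← mul_mul_mulVec_eq_zero_iff hRunit]
    exact hRΛR.mulVec_eq_zero_of_min_eigenvector_add_smul_one
      (exists_ne_zero_mul_mul_mulVec_eq_zero hRunit hu₀ hΛu₀) hw (hsplit ▸ heig) (hsplit ▸ hmin)
  have hγ0 : γ ≠ 0 := by
    rw [hγ, ← mulVec_zero R]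
    exact (mulVec_injective_iff_isUnit.2 hRunit).ne hw
  refine ⟨⟨hΛγ, hγ0, exists_smul_eq_of_forall_exists_smul_eq hspan hΛγ hγ0⟩, fun β hβ => ?_⟩
  obtain ⟨a, ha⟩ := (hβ γ).1 hΛγ
  exact neg_div_eq_of_eq_smul_sumElim (by rintro rfl; simp [ha] at hγ0) ha

/-- Correctness of the LIMLK/TLS procedure: if `Σ = Λ + cΩ` with `c > 0`, `Λ` PSD with
one-dimensional kernel, and `w` is the smallest eigenvector of `Ω^{-1/2} Σ Ω^{-1/2}`, then
`γ = Ω^{-1/2} w` spans the kernel of `Λ`; if moreover the kernel of `Λ` is spanned by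
`[1, -βᵀ]ᵀ`, then `-γ_S/γ_Y = β`. -/
theorem stmt19 (m : ℕ) (Ω Sig Λ : Matrix (Unit ⊕ Fin m) (Unit ⊕ Fin m) ℝ) (c : ℝ)
    (hΩ : Ω.PosDef) (hSig : Sig.PosSemidef) (hΛ : Λ.PosSemidef) (hc : 0 < c)
    (hdecomp : Sig = Λ + c • Ω)
    (hker1dim : ∃ u : Unit ⊕ Fin m → ℝ, u ≠ 0 ∧ Λ.mulVec u = 0 ∧
      ∀ u' : Unit ⊕ Fin m → ℝ, Λ.mulVec u' = 0 → ∃ a : ℝ, u' = a • u)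
    (R : Matrix (Unit ⊕ Fin m) (Unit ⊕ Fin m) ℝ) (hR : R = (CFC.sqrt Ω)⁻¹)
    (κ : ℝ) (w : Unit ⊕ Fin m → ℝ) (hw : w ≠ 0)
    (heig : (R * Sig * R).mulVec w = κ • w)
    (hmin : ∀ (κ' : ℝ) (w' : Unit ⊕ Fin m → ℝ), w' ≠ 0 →
      (R * Sig * R).mulVec w' = κ' • w' → κ ≤ κ')
    (γ : Unit ⊕ Fin m → ℝ) (hγ : γ = R.mulVec w) :
    (Λ.mulVec γ = 0 ∧ γ ≠ 0 ∧
      ∀ u : Unit ⊕ Fin m → ℝ, Λ.mulVec u = 0 → ∃ a : ℝ, u = a • γ) ∧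
    (∀ β : Fin m → ℝ,
      (∀ u : Unit ⊕ Fin m → ℝ, Λ.mulVec u = 0 ↔
        ∃ a : ℝ, u = a • (Sum.elim (fun _ => (1 : ℝ)) fun i => -β i)) →
      ∀ i, -(γ (Sum.inr i)) / γ (Sum.inl ()) = β i) :=
  stmt19_general m Ω Sig Λ c hΩ hΛ hdecomp hker1dim R hR κ w hw heig hmin γ hγ
end
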